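/- arXiv:math/0601540 — 3 statements merged into one kernel-verified Lean document; each statement's English description precedes it below -/
import Mathlib

section
/- Let M be a symmetric negative definite real n×n matrix such that M_{ij} ≥ 0 whenever i ≠ j. Then every entry of -M⁻¹ is non-negative. -/
/-!
Write `A = -M`, a matrix with non-positive off-diagonal entries and positive quadratic form.
If `A x ≥ 0`, split `x = x⁺ - x⁻`. Then `x⁻ ⬝ A x⁻ = x⁻ ⬝ A x⁺ - x⁻ ⬝ A x ≤ 0`: in the first term
only off-diagonal entries survive, as `x⁺` and `x⁻` have disjoint supports. Positivity of the form
forces `x⁻ = 0`. Applied to the columns of `A⁻¹`, which `A` maps to standard basis vectors, this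
shows `A⁻¹ = -M⁻¹` is entrywise non-negative.
-/

open Matrix

namespace Matrix

variable {ι : Type*} [Fintype ι]

theorem isUnit_of_dotProduct_mulVec_ne_zero [DecidableEq ι] {K : Type*} [Field K]
    {A : Matrix ι ι K} (hA : ∀ v : ι → K, v ≠ 0 → v ⬝ᵥ A *ᵥ v ≠ 0) : IsUnit A := by
  refine mulVec_injective_iff_isUnit.mp fun u v huv => ?_
  by_contra hne
  apply hA (u - v) (sub_ne_zero.mpr hne)
  rw [mulVec_sub, huv, sub_self, dotProduct_zero]

variable {R : Type*} [CommRing R] [LinearOrder R] [IsOrderedRing R] {A : Matrix ι ι R}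

theorem negPart_dotProduct_mulVec_posPart_nonpos (hA : ∀ i j, i ≠ j → A i j ≤ 0)
    (x : ι → R) : x⁻ ⬝ᵥ A *ᵥ x⁺ ≤ 0 := by
  simp only [dotProduct, mulVec, Finset.mul_sum]
  refine Finset.sum_nonpos fun k _ => Finset.sum_nonpos fun l _ => ?_
  simp only [Pi.negPart_apply, Pi.posPart_apply]
  obtain rfl | hkl := eq_or_ne k l
  · rcases le_total (x k) 0 with hx | hx
    · simp [posPart_eq_zero.mpr hx]
    · simp [negPart_eq_zero.mpr hx]
  · exact mul_nonpos_of_nonneg_of_nonpos (negPart_nonneg _)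
      (mul_nonpos_of_nonpos_of_nonneg (hA k l hkl) (posPart_nonneg _))

theorem nonneg_of_nonneg_mulVec (hA : ∀ i j, i ≠ j → A i j ≤ 0)
    (hpos : ∀ v : ι → R, v ≠ 0 → 0 < v ⬝ᵥ A *ᵥ v) {x : ι → R} (hx : 0 ≤ A *ᵥ x) :
    0 ≤ x := by
  have hneg : x⁻ ⬝ᵥ A *ᵥ x⁻ ≤ 0 := by
    have hsplit : x⁻ ⬝ᵥ A *ᵥ x⁻ = x⁻ ⬝ᵥ A *ᵥ x⁺ - x⁻ ⬝ᵥ A *ᵥ x := by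
      have hx' : x⁻ = x⁺ - x := by rw [← sub_sub_self x⁺ x⁻, posPart_sub_negPart]
      nth_rewrite 2 [hx']
      rw [mulVec_sub, dotProduct_sub]
    rw [hsplit, sub_nonpos]
    exact (negPart_dotProduct_mulVec_posPart_nonpos hA x).trans
      (dotProduct_nonneg_of_nonneg (negPart_nonneg x) hx)
  have hx_neg : x⁻ = 0 := by
    by_contra h
    exact (hpos _ h).not_ge hneg
  exact negPart_eq_zero.mp hx_neg

theorem inv_apply_nonneg [DecidableEq ι] {K : Type*} [Field K] [LinearOrder K]
    [IsStrictOrderedRing K] {A : Matrix ι ι K} (hA : ∀ i j, i ≠ j → A i j ≤ 0)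
    (hpos : ∀ v : ι → K, v ≠ 0 → 0 < v ⬝ᵥ A *ᵥ v) (i j : ι) : 0 ≤ A⁻¹ i j := by
  have hunit : IsUnit A := isUnit_of_dotProduct_mulVec_ne_zero fun v hv => (hpos v hv).ne'
  have hcol : A *ᵥ (A⁻¹ *ᵥ Pi.single j 1) = Pi.single j 1 := by
    rw [mulVec_mulVec, mul_nonsing_inv A ((isUnit_iff_isUnit_det A).mp hunit), one_mulVec]
  have hcol_nonneg := nonneg_of_nonneg_mulVec hA hpos (hcol ▸ Pi.single_nonneg.mpr zero_le_one)
  simpa [mulVec_single_one] using hcol_nonneg i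

end Matrix

theorem stmt_0_general (n : ℕ) (M : Matrix (Fin n) (Fin n) ℝ)
    (hneg : ∀ v : Fin n → ℝ, v ≠ 0 → v ⬝ᵥ (M *ᵥ v) < 0)
    (hoff : ∀ i j : Fin n, i ≠ j → 0 ≤ M i j) :
    ∀ i j : Fin n, 0 ≤ (-(M⁻¹)) i j := by
  have hunit : IsUnit M.det :=
    (isUnit_iff_isUnit_det M).mp (isUnit_of_dotProduct_mulVec_ne_zero fun v hv => (hneg v hv).ne)
  have hinv : (-M)⁻¹ = -M⁻¹ := inv_eq_left_inv (by rw [neg_mul_neg, nonsing_inv_mul M hunit])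
  rw [← hinv]
  refine inv_apply_nonneg (fun i j hij => by simpa using hoff i j hij) fun v hv => ?_
  simpa [neg_mulVec] using hneg v hv

/-- Let M be a symmetric negative definite real n×n matrix with non-negative
off-diagonal entries. Then every entry of -M⁻¹ is non-negative. -/
theorem stmt_0 (n : ℕ) (M : Matrix (Fin n) (Fin n) ℝ)
    (hsymm : M.IsSymm)
    (hneg : ∀ v : Fin n → ℝ, v ≠ 0 → v ⬝ᵥ (M *ᵥ v) < 0)
    (hoff : ∀ i j : Fin n, i ≠ j → 0 ≤ M i j) :
    ∀ i j : Fin n, 0 ≤ (-(M⁻¹)) i j :=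
  stmt_0_general n M hneg hoff
end

section
/- Let M be a symmetric negative definite real n×n matrix with non-negative off-diagonal entries, and let v be a vector with all entries strictly positive. Then the vector t = -M⁻¹v has all entries strictly positive. -/
/-! The vector `t = -M⁻¹ v` satisfies `M t = -v < 0`. Pairing with the negative part `t⁻` gives
`t⁻ ⬝ M t = t⁻ ⬝ M t⁺ - t⁻ ⬝ M t⁻ ≤ 0`, and `t⁻ ⬝ M t⁺ ≥ 0` because `t⁺`, `t⁻` have disjoint supports
and the off-diagonal entries are nonnegative; so `t⁻ ⬝ M t⁻ ≥ 0` and definiteness forces `t⁻ = 0`.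
If moreover `t i = 0`, then `(M t) i = ∑ j ≠ i, M i j t j ≥ 0`, a contradiction. -/

open Matrix

namespace Matrix

theorem det_ne_zero_of_dotProduct_mulVec_neg {ι R : Type*} [Fintype ι] [DecidableEq ι] [Field R]
    [Preorder R] {M : Matrix ι ι R}
    (hneg : ∀ w : ι → R, w ≠ 0 → w ⬝ᵥ (M *ᵥ w) < 0) : M.det ≠ 0 := by
  intro h
  obtain ⟨w, hw, hMw⟩ := M.exists_mulVec_eq_zero_iff.mpr h
  simpa [hMw] using hneg w hw

variable {ι R : Type*} [Fintype ι] [CommRing R] [LinearOrder R] [IsStrictOrderedRing R]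

theorem dotProduct_mulVec_nonneg_of_mul_eq_zero {M : Matrix ι ι R}
    (hoff : ∀ i j, i ≠ j → 0 ≤ M i j) {w p : ι → R} (hw : 0 ≤ w) (hp : 0 ≤ p)
    (hwp : ∀ i, w i * p i = 0) : 0 ≤ w ⬝ᵥ (M *ᵥ p) := by
  simp only [dotProduct, mulVec, Finset.mul_sum]
  refine Finset.sum_nonneg fun i _ => Finset.sum_nonneg fun j _ => ?_
  by_cases hij : i = j
  · subst hij
    simp [mul_left_comm (w i), hwp i]
  · exact mul_nonneg (hw i) (mul_nonneg (hoff i j hij) (hp j))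

theorem nonneg_of_mulVec_nonpos {M : Matrix ι ι R}
    (hneg : ∀ w : ι → R, w ≠ 0 → w ⬝ᵥ (M *ᵥ w) < 0) (hoff : ∀ i j, i ≠ j → 0 ≤ M i j)
    {t : ι → R} (hMt : M *ᵥ t ≤ 0) : 0 ≤ t := by
  have hdisj : ∀ i, t⁻ i * t⁺ i = 0 := fun i => by
    rcases le_total (t i) 0 with h | h
    · simp [posPart_eq_zero.mpr h]
    · simp [negPart_eq_zero.mpr h]
  have hpos : 0 ≤ t⁻ ⬝ᵥ (M *ᵥ t⁺) :=
    dotProduct_mulVec_nonneg_of_mul_eq_zero hoff (negPart_nonneg t) (posPart_nonneg t) hdisj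
  have hnonpos : t⁻ ⬝ᵥ (M *ᵥ t) ≤ 0 := by
    simpa using dotProduct_le_dotProduct_of_nonneg_left hMt (negPart_nonneg t)
  have hsplit : t⁻ ⬝ᵥ (M *ᵥ t) = t⁻ ⬝ᵥ (M *ᵥ t⁺) - t⁻ ⬝ᵥ (M *ᵥ t⁻) := by
    rw [← dotProduct_sub, ← mulVec_sub, posPart_sub_negPart]
  have hzero : t⁻ = 0 := by
    by_contra hne
    linarith [hneg _ hne]
  exact negPart_eq_zero.mp hzero

theorem pos_of_mulVec_neg {M : Matrix ι ι R} (hoff : ∀ i j, i ≠ j → 0 ≤ M i j)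
    {t : ι → R} (ht : 0 ≤ t) (hMt : ∀ i, (M *ᵥ t) i < 0) (i : ι) : 0 < t i := by
  refine (ht i).lt_of_ne fun hti => (hMt i).not_ge ?_
  refine Finset.sum_nonneg fun j _ => ?_
  by_cases hij : i = j
  · subst hij
    simp [← hti]
  · exact mul_nonneg (hoff i j hij) (ht j)

end Matrix

theorem stmt_1_general (n : ℕ) (M : Matrix (Fin n) (Fin n) ℝ)
    (hneg : ∀ w : Fin n → ℝ, w ≠ 0 → w ⬝ᵥ (M *ᵥ w) < 0)
    (hoff : ∀ i j : Fin n, i ≠ j → 0 ≤ M i j)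
    (v : Fin n → ℝ) (hv : ∀ i, 0 < v i) :
    ∀ i, 0 < (-(M⁻¹ *ᵥ v)) i := by
  have hdet := det_ne_zero_of_dotProduct_mulVec_neg hneg
  have hMt : M *ᵥ -(M⁻¹ *ᵥ v) = -v := by
    rw [mulVec_neg, mulVec_mulVec, mul_nonsing_inv _ hdet.isUnit, one_mulVec]
  have hMt_neg : ∀ i, (M *ᵥ -(M⁻¹ *ᵥ v)) i < 0 := fun i => by
    simpa [hMt] using hv i
  exact pos_of_mulVec_neg hoff (nonneg_of_mulVec_nonpos hneg hoff fun i => (hMt_neg i).le) hMt_neg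

/-- Let M be a symmetric negative definite real n×n matrix with non-negative
off-diagonal entries, and v a vector with all entries strictly positive.
Then t = -M⁻¹v has all entries strictly positive. -/
theorem stmt_1 (n : ℕ) (M : Matrix (Fin n) (Fin n) ℝ)
    (hsymm : M.IsSymm)
    (hneg : ∀ w : Fin n → ℝ, w ≠ 0 → w ⬝ᵥ (M *ᵥ w) < 0)
    (hoff : ∀ i j : Fin n, i ≠ j → 0 ≤ M i j)
    (v : Fin n → ℝ) (hv : ∀ i, 0 < v i) :
    ∀ i, 0 < (-(M⁻¹ *ᵥ v)) i :=
  stmt_1_general n M hneg hoff v hv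
end

section
/- Let e₁,…,eₙ be homology classes with eᵢ·eᵢ < 0, eᵢ·eⱼ ≥ 0 for i ≠ j, and suppose ω and α lie in the positive cone of a signature (1,m) intersection form with ω·eᵢ > 0 and α·eᵢ ≤ 0 for all i. Then every positive linear combination ∑aᵢeᵢ (aᵢ ≥ 0, not all zero) has negative square, and consequently the eᵢ are linearly independent. -/
/-!
A form that is negative definite on a hyperplane has no two orthogonal vectors of positive
square, so `ω^⊥` is non-positive. For `x` with `x·x ≥ 0` and `ω·x > 0`, the vector
`(ω·x) α - (ω·α) x` lies in `ω^⊥`; expanding its square gives `α·x > 0`. A non-negative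
combination `x` of the `eᵢ` has `ω·x > 0 ≥ α·x`, hence `x·x < 0`. Finally a linear relation
among the `eᵢ` splits into positive and negative parts with disjoint supports; both sides give
the same vector `x`, and `x·x` is then a sum of off-diagonal terms `eᵢ·eⱼ ≥ 0`.
-/

open Finset

section BilinearForm

variable {V : Type*} [AddCommGroup V] [Module ℝ V] {B : V →ₗ[ℝ] V →ₗ[ℝ] ℝ}

theorem exists_ker_eq_of_isCompl_of_finrank_eq_one {W L : Submodule ℝ V} (hcompl : IsCompl W L)
    (hL : Module.finrank ℝ L = 1) : ∃ f : V →ₗ[ℝ] ℝ, LinearMap.ker f = W := by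
  have : Module.Finite ℝ L := Module.finite_of_finrank_eq_succ hL
  let toReal : L ≃ₗ[ℝ] ℝ := LinearEquiv.ofFinrankEq L ℝ (by simp [hL])
  refine ⟨toReal.toLinearMap ∘ₗ L.projectionOnto W hcompl.symm, ?_⟩
  rw [LinearEquiv.ker_comp, Submodule.ker_projectionOnto]

section Hyperplane

variable (hB : ∀ x y, B x y = B y x) (f : V →ₗ[ℝ] ℝ)
  (hf : ∀ v, f v = 0 → v ≠ 0 → B v v < 0)
include hB hf

theorem apply_self_nonpos_of_orthogonal {u w : V} (hu : 0 < B u u) (huw : B u w = 0) :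
    B w w ≤ 0 := by
  by_contra! hw
  have hker : ∀ v, f v = 0 → B v v ≤ 0 := fun v hv ↦ by
    rcases eq_or_ne v 0 with rfl | hv0
    · simp
    · exact (hf v hv hv0).le
  set z := f w • u - f u • w
  have hfz : f z = 0 := by simp only [z, map_sub, map_smul, smul_eq_mul]; ring
  have hzz : B z z = f w ^ 2 * B u u + f u ^ 2 * B w w := by
    simp only [z, map_sub, map_smul, LinearMap.sub_apply, LinearMap.smul_apply, smul_eq_mul,
      huw, hB w u]
    ring
  have hfu : f u = 0 := by
    by_contra hfu
    nlinarith [hker z hfz, mul_nonneg (sq_nonneg (f w)) hu.le,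
      mul_pos (pow_two_pos_of_ne_zero hfu) hw]
  exact (hu.trans (hf u hfu (by rintro rfl; simp at hu))).false

theorem apply_self_neg_of_pos_of_nonpos {ω α x : V} (hω : 0 < B ω ω) (hα : 0 < B α α)
    (hαω : 0 < B α ω) (hωx : 0 < B ω x) (hαx : B α x ≤ 0) : B x x < 0 := by
  by_contra! hx
  set v := B ω x • α - B ω α • x
  have hωv : B ω v = 0 := by
    simp only [v, map_sub, map_smul, smul_eq_mul]; ring
  have hvv : B v v = B ω x ^ 2 * B α α - 2 * B ω x * B ω α * B α x + B ω α ^ 2 * B x x := by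
    simp only [v, map_sub, map_smul, LinearMap.sub_apply, LinearMap.smul_apply, smul_eq_mul,
      hB x α]
    ring
  have hv_nonpos := apply_self_nonpos_of_orthogonal hB f hf hω hωv
  rw [hB] at hαω
  nlinarith [mul_pos (mul_pos hωx hωx) hα, mul_nonneg (mul_nonneg hαω.le hαω.le) hx,
    mul_nonneg (mul_nonneg hωx.le hαω.le) (neg_nonneg.mpr hαx)]

end Hyperplane

section Combinations

variable {ι : Type*} [Fintype ι]

theorem pos_apply_sum_smul (g : V →ₗ[ℝ] ℝ) {e : ι → V} (he : ∀ i, 0 < g (e i)) {a : ι → ℝ}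
    (ha : 0 ≤ a) (ha0 : a ≠ 0) : 0 < g (∑ i, a i • e i) := by
  obtain ⟨j, hj⟩ := Function.ne_iff.mp ha0
  simp only [map_sum, map_smul, smul_eq_mul]
  exact sum_pos' (fun i _ ↦ mul_nonneg (ha i) (he i).le)
    ⟨j, mem_univ j, mul_pos ((ha j).lt_of_ne' hj) (he j)⟩

theorem apply_sum_smul_nonpos (g : V →ₗ[ℝ] ℝ) {e : ι → V} (he : ∀ i, g (e i) ≤ 0)
    {a : ι → ℝ} (ha : 0 ≤ a) : g (∑ i, a i • e i) ≤ 0 := by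
  simp only [map_sum, map_smul, smul_eq_mul]
  exact sum_nonpos fun i _ ↦ mul_nonpos_of_nonneg_of_nonpos (ha i) (he i)

theorem apply_sum_smul_sum_smul (e : ι → V) (a b : ι → ℝ) :
    B (∑ i, a i • e i) (∑ j, b j • e j) = ∑ i, ∑ j, a i * b j * B (e i) (e j) := by
  simp only [map_sum, map_smul, LinearMap.sum_apply, LinearMap.smul_apply, smul_eq_mul, mul_sum]
  rw [sum_comm]
  exact sum_congr rfl fun i _ ↦ sum_congr rfl fun j _ ↦ by ring

theorem posPart_mul_negPart_eq_zero (t : ℝ) : t⁺ * t⁻ = 0 := by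
  rcases le_total t 0 with ht | ht
  · rw [posPart_eq_zero.mpr ht, zero_mul]
  · rw [negPart_eq_zero.mpr ht, mul_zero]

theorem linearIndependent_of_offDiag_nonneg {e : ι → V} (hoff : ∀ i j, i ≠ j → 0 ≤ B (e i) (e j))
    (hneg : ∀ a : ι → ℝ, 0 ≤ a → a ≠ 0 → B (∑ i, a i • e i) (∑ i, a i • e i) < 0) :
    LinearIndependent ℝ e := by
  by_contra hdep
  obtain ⟨g, hg, i₀, hi₀⟩ := Fintype.not_linearIndependent_iff.mp hdep
  have hsum : ∑ i, g⁺ i • e i = ∑ i, g⁻ i • e i := by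
    rw [← sub_eq_zero, ← sum_sub_distrib, ← hg]
    refine sum_congr rfl fun i _ ↦ ?_
    rw [← sub_smul, ← Pi.sub_apply, posPart_sub_negPart]
  have hcross : 0 ≤ B (∑ i, g⁺ i • e i) (∑ j, g⁻ j • e j) := by
    rw [apply_sum_smul_sum_smul]
    refine sum_nonneg fun i _ ↦ sum_nonneg fun j _ ↦ ?_
    rcases eq_or_ne i j with rfl | hij
    · simp [Pi.posPart_apply, Pi.negPart_apply, posPart_mul_negPart_eq_zero]
    · exact mul_nonneg (mul_nonneg (posPart_nonneg _) (negPart_nonneg _)) (hoff i j hij)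
  have hparts : g⁺ ≠ 0 ∨ g⁻ ≠ 0 := by
    by_contra! h
    exact hi₀ (by simpa [h.1, h.2] using congrFun (posPart_sub_negPart g) i₀ |>.symm)
  rcases hparts with hpos | hneg'
  · exact (hneg _ (posPart_nonneg g) hpos).not_ge (by rwa [← hsum] at hcross)
  · exact (hneg _ (negPart_nonneg g) hneg').not_ge (by rwa [hsum] at hcross)

end Combinations

end BilinearForm

theorem stmt_4_general (V : Type*) [AddCommGroup V] [Module ℝ V]
    (B : V →ₗ[ℝ] V →ₗ[ℝ] ℝ) (hBsymm : ∀ x y, B x y = B y x)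
    (W L : Submodule ℝ V) (hcompl : IsCompl W L)
    (hL : Module.finrank ℝ L = 1)
    (hWneg : ∀ w ∈ W, w ≠ 0 → B w w < 0)
    (n : ℕ) (e : Fin n → V) (ω α : V)
    (hoff : ∀ i j, i ≠ j → 0 ≤ B (e i) (e j))
    (hω : 0 < B ω ω) (hα : 0 < B α α) (hαω : 0 < B α ω)
    (hωe : ∀ i, 0 < B ω (e i)) (hαe : ∀ i, B α (e i) ≤ 0) :
    (∀ a : Fin n → ℝ, (∀ i, 0 ≤ a i) → a ≠ 0 →
      B (∑ i, a i • e i) (∑ i, a i • e i) < 0) ∧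
    LinearIndependent ℝ e := by
  obtain ⟨f, hf⟩ := exists_ker_eq_of_isCompl_of_finrank_eq_one hcompl hL
  have hfneg : ∀ v, f v = 0 → v ≠ 0 → B v v < 0 := fun v hv ↦
    hWneg v (hf ▸ LinearMap.mem_ker.mpr hv)
  have hcomb : ∀ a : Fin n → ℝ, 0 ≤ a → a ≠ 0 → B (∑ i, a i • e i) (∑ i, a i • e i) < 0 :=
    fun a ha ha0 ↦ apply_self_neg_of_pos_of_nonpos hBsymm f hfneg hω hα hαω
      (pos_apply_sum_smul (B ω) hωe ha ha0) (apply_sum_smul_nonpos (B α) hαe ha)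
  exact ⟨fun a ha ↦ hcomb a ha, linearIndependent_of_offDiag_nonneg hoff hcomb⟩

/-- Let eᵢ be classes with eᵢ·eᵢ < 0, eᵢ·eⱼ ≥ 0 for i ≠ j, and ω, α in the
positive cone of a signature (1,m) intersection form with ω·eᵢ > 0 and
α·eᵢ ≤ 0 for all i.  Then every non-negative, not-all-zero combination ∑aᵢeᵢ
has negative square, and the eᵢ are linearly independent. -/
theorem stmt_4 (V : Type*) [AddCommGroup V] [Module ℝ V]
    (B : V →ₗ[ℝ] V →ₗ[ℝ] ℝ) (hBsymm : ∀ x y, B x y = B y x)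
    (W L : Submodule ℝ V) (hcompl : IsCompl W L)
    (hL : Module.finrank ℝ L = 1)
    (hWneg : ∀ w ∈ W, w ≠ 0 → B w w < 0)
    (hLpos : ∀ l ∈ L, l ≠ 0 → 0 < B l l)
    (n : ℕ) (e : Fin n → V) (ω α : V)
    (hdiag : ∀ i, B (e i) (e i) < 0)
    (hoff : ∀ i j, i ≠ j → 0 ≤ B (e i) (e j))
    (hω : 0 < B ω ω) (hα : 0 < B α α) (hαω : 0 < B α ω)
    (hωe : ∀ i, 0 < B ω (e i)) (hαe : ∀ i, B α (e i) ≤ 0) :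
    (∀ a : Fin n → ℝ, (∀ i, 0 ≤ a i) → a ≠ 0 →
      B (∑ i, a i • e i) (∑ i, a i • e i) < 0) ∧
    LinearIndependent ℝ e :=
  stmt_4_general V B hBsymm W L hcompl hL hWneg n e ω α hoff hω hα hαω hωe hαe
end
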